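/- Let (K,|·|) be a normed field, f ∈ K[z] a polynomial of degree n ≥ 2 having n simple zeros in K, ξ ∈ Kⁿ a root-vector of f, and 1 ≤ p ≤ ∞ with conjugate exponent q. Suppose x ∈ Kⁿ satisfies E(x) = ‖(x − ξ)/d(ξ)‖_p < 1/2^{1/q}. Then x has pairwise distinct components, E(Tx) ≤ E(x)·φ(E(x)), and |T_i(x) − ξ_i| ≤ φ(E(x)) · |x_i − ξ_i| for every i, where T is the Weierstrass iteration function and φ(t) = (1 + t/((n−1)^{1/p}(1 − 2^{1/q} t)))^{n−1} − 1. -/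

import Mathlib

open Finset Filter Topology
open scoped ENNReal

noncomputable def pnorm {n : ℕ} (p : ℝ≥0∞) (v : Fin n → ℝ) : ℝ :=
  if p = ⊤ then ⨆ i, |v i| else (∑ i, |v i| ^ p.toReal) ^ (1 / p.toReal)

noncomputable def epow (a : ℝ) (p : ℝ≥0∞) : ℝ :=
  if p = ⊤ then 1 else a ^ (1 / p.toReal)

noncomputable def dsep {K : Type*} [NormedField K] {n : ℕ} (x : Fin n → K) (i : Fin n) : ℝ :=
  sInf {r : ℝ | ∃ j, j ≠ i ∧ r = ‖x i - x j‖}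

noncomputable def Wcorr {K : Type*} [NormedField K] {n : ℕ} (f : Polynomial K)
    (x : Fin n → K) (i : Fin n) : K :=
  Polynomial.eval (x i) f / (f.leadingCoeff * ∏ j ∈ Finset.univ.erase i, (x i - x j))

def IsRootVector {K : Type*} [NormedField K] {n : ℕ} (f : Polynomial K) (ξ : Fin n → K) : Prop :=
  ∀ z : K, Polynomial.eval z f = f.leadingCoeff * ∏ i, (z - ξ i)

/-!
The error of one Weierstrass step factorises as
`T_i(x) - ξ_i = (x_i - ξ_i) (1 - ∏_{k ≠ i} (1 + (x_k - ξ_k) / (x_i - x_k)))`.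
With `e_k = |x_k - ξ_k| / d_k(ξ)` and `E = ‖e‖_p`, Hölder's inequality gives
`e_i + e_k ≤ 2^{1/q} E`, hence `|x_i - x_k| ≥ (1 - 2^{1/q} E) |ξ_i - ξ_k|`: the components of `x`
stay separated and the `k`-th factor is `1 + t_k` with `|t_k| ≤ e_k / (1 - 2^{1/q} E)`. Hölder once
more bounds `∑ |t_k|` by `(n - 1)^{1/q} E / (1 - 2^{1/q} E)`, and `|∏ (1 + t_k) - 1| ≤
∏ (1 + |t_k|) - 1` together with AM-GM and `(n - 1)^{1/q} / (n - 1) = (n - 1)^{-1/p}` yields the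
factor `φ(E)`.
-/

open Function

namespace ENNReal.HolderConjugate

variable (p q : ℝ≥0∞) [p.HolderConjugate q]

lemma trichotomy :
    (p = ⊤ ∧ q = 1) ∨ (p = 1 ∧ q = ⊤) ∨
      (p ≠ ⊤ ∧ q ≠ ⊤ ∧ p.toReal.HolderConjugate q.toReal) := by
  by_cases hp : p = ⊤
  · exact .inl ⟨hp, (eq_top_iff_eq_one p q).1 hp⟩
  by_cases hq : q = ⊤
  · exact .inr (.inl ⟨(eq_top_iff_eq_one q p).1 hq, hq⟩)
  exact .inr (.inr ⟨hp, hq, toReal_of_ne_top hp hq⟩)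

end ENNReal.HolderConjugate

lemma epow_pos {a : ℝ} (ha : 0 < a) (p : ℝ≥0∞) : 0 < epow a p := by
  unfold epow
  split_ifs
  exacts [one_pos, Real.rpow_pos_of_pos ha _]

lemma epow_mul_epow {a : ℝ} (ha : 0 < a) (p q : ℝ≥0∞) [p.HolderConjugate q] :
    epow a p * epow a q = a := by
  rcases ENNReal.HolderConjugate.trichotomy p q with ⟨rfl, rfl⟩ | ⟨rfl, rfl⟩ | ⟨hp, hq, hpq⟩
  · simp [epow]
  · simp [epow]
  · rw [epow, epow, if_neg hp, if_neg hq, ← Real.rpow_add ha, one_div, one_div,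
      hpq.inv_add_inv_eq_one, Real.rpow_one]

lemma epow_div_self {a : ℝ} (ha : 0 < a) (p q : ℝ≥0∞) [p.HolderConjugate q] :
    epow a q / a = (epow a p)⁻¹ :=
  calc epow a q / a = epow a q / (epow a p * epow a q) := by rw [epow_mul_epow ha p q]
    _ = (epow a p)⁻¹ := div_mul_cancel_right₀ (epow_pos ha q).ne' _

section pnorm

variable {n : ℕ}

lemma pnorm_nonneg (p : ℝ≥0∞) (v : Fin n → ℝ) : 0 ≤ pnorm p v := by
  unfold pnorm
  split_ifs
  exacts [Real.iSup_nonneg fun i => abs_nonneg _, by positivity]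

lemma pnorm_le_mul_of_abs_le {p : ℝ≥0∞} (hp : p ≠ 0) {v w : Fin n → ℝ} {c : ℝ} (hc : 0 ≤ c)
    (h : ∀ i, |w i| ≤ c * |v i|) : pnorm p w ≤ c * pnorm p v := by
  unfold pnorm
  split_ifs with hpt
  · have hsup : ∀ i, |v i| ≤ ⨆ j, |v j| :=
      le_ciSup (f := fun j => |v j|) (Set.finite_range _).bddAbove
    refine Real.iSup_le (fun i => (h i).trans (mul_le_mul_of_nonneg_left (hsup i) hc)) ?_
    exact mul_nonneg hc (Real.iSup_nonneg fun i => abs_nonneg _)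
  · have hr : 0 < p.toReal := ENNReal.toReal_pos hp hpt
    calc (∑ i, |w i| ^ p.toReal) ^ (1 / p.toReal)
        ≤ (∑ i, (c * |v i|) ^ p.toReal) ^ (1 / p.toReal) := by
          gcongr with i
          exact h i
      _ = c * (∑ i, |v i| ^ p.toReal) ^ (1 / p.toReal) := by
          simp_rw [Real.mul_rpow hc (abs_nonneg _), ← Finset.mul_sum]
          rw [Real.mul_rpow (by positivity) (by positivity), one_div,
            Real.rpow_rpow_inv hc hr.ne']

lemma sum_abs_le_epow_card_mul_pnorm (p q : ℝ≥0∞) [p.HolderConjugate q] (v : Fin n → ℝ)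
    (s : Finset (Fin n)) : ∑ k ∈ s, |v k| ≤ epow #s q * pnorm p v := by
  rcases ENNReal.HolderConjugate.trichotomy p q with ⟨rfl, rfl⟩ | ⟨rfl, rfl⟩ | ⟨hp, hq, hpq⟩
  · simp only [pnorm, epow, if_true, ENNReal.one_ne_top, if_false, ENNReal.toReal_one, div_one,
      Real.rpow_one]
    calc ∑ k ∈ s, |v k| ≤ ∑ _k ∈ s, ⨆ j, |v j| :=
          sum_le_sum fun k _ => le_ciSup (f := fun j => |v j|) (Set.finite_range _).bddAbove k
      _ = #s * ⨆ j, |v j| := by rw [sum_const, nsmul_eq_mul]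
  · simp only [pnorm, epow, if_true, ENNReal.one_ne_top, if_false, ENNReal.toReal_one, div_one,
      Real.rpow_one, one_mul]
    exact sum_le_sum_of_subset_of_nonneg (subset_univ s) fun i _ _ => abs_nonneg _
  · calc ∑ k ∈ s, |v k| = ∑ k ∈ s, |v k| * 1 := by simp only [mul_one]
      _ ≤ (∑ k ∈ s, |v k| ^ p.toReal) ^ (1 / p.toReal) *
            (∑ _k ∈ s, (1 : ℝ) ^ q.toReal) ^ (1 / q.toReal) :=
          Real.inner_le_Lp_mul_Lq_of_nonneg s hpq (fun _ _ => abs_nonneg _) fun _ _ => zero_le_one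
      _ ≤ (∑ k, |v k| ^ p.toReal) ^ (1 / p.toReal) * (#s : ℝ) ^ (1 / q.toReal) := by
          simp only [Real.one_rpow, sum_const, nsmul_eq_mul, mul_one]
          gcongr
          exact subset_univ s
      _ = epow #s q * pnorm p v := by rw [pnorm, epow, if_neg hp, if_neg hq, mul_comm]

lemma abs_add_abs_le_epow_two_mul_pnorm (p q : ℝ≥0∞) [p.HolderConjugate q] (v : Fin n → ℝ)
    {i j : Fin n} (hij : i ≠ j) : |v i| + |v j| ≤ epow 2 q * pnorm p v := by
  simpa [Finset.sum_pair hij, Finset.card_pair hij] using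
    sum_abs_le_epow_card_mul_pnorm p q v {i, j}

end pnorm

lemma Finset.norm_prod_one_add_sub_one_le_prod_sub_one {ι R : Type*} [NormedCommRing R]
    [NormOneClass R] (s : Finset ι) (f : ι → R) :
    ‖∏ i ∈ s, (1 + f i) - 1‖ ≤ ∏ i ∈ s, (1 + ‖f i‖) - 1 := by
  classical
  induction s using Finset.induction_on with
  | empty => simp
  | insert a s ha ih =>
    rw [prod_insert ha, prod_insert ha,
      show (1 + f a) * ∏ i ∈ s, (1 + f i) - 1 =
        (∏ i ∈ s, (1 + f i) - 1) + f a * ∏ i ∈ s, (1 + f i) by ring]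
    have hprod : ‖∏ i ∈ s, (1 + f i)‖ ≤ ∏ i ∈ s, (1 + ‖f i‖) := by
      have := norm_le_norm_sub_add (∏ i ∈ s, (1 + f i)) 1
      rw [norm_one] at this
      linarith
    calc ‖(∏ i ∈ s, (1 + f i) - 1) + f a * ∏ i ∈ s, (1 + f i)‖
        ≤ (∏ i ∈ s, (1 + ‖f i‖) - 1) + ‖f a‖ * ∏ i ∈ s, (1 + ‖f i‖) := by
          refine norm_add_le_of_le ih ((norm_mul_le _ _).trans ?_)
          gcongr
      _ = (1 + ‖f a‖) * ∏ i ∈ s, (1 + ‖f i‖) - 1 := by ring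

lemma Real.prod_one_add_le_one_add_sum_div_card_pow {ι : Type*} (s : Finset ι) {a : ι → ℝ}
    (ha : ∀ i ∈ s, 0 ≤ a i) : ∏ i ∈ s, (1 + a i) ≤ (1 + (∑ i ∈ s, a i) / #s) ^ #s := by
  rcases s.eq_empty_or_nonempty with rfl | hs
  · simp
  have hcard : (0 : ℝ) < #s := by exact_mod_cast hs.card_pos
  have hz : ∀ i ∈ s, 0 ≤ 1 + a i := fun i hi => by linarith [ha i hi]
  have hamgm := Real.geom_mean_le_arith_mean_weighted s (fun _ => (#s : ℝ)⁻¹) (fun i => 1 + a i)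
    (fun _ _ => by positivity) (by simp [hcard.ne']) hz
  have hmean : ∑ i ∈ s, (#s : ℝ)⁻¹ * (1 + a i) = 1 + (∑ i ∈ s, a i) / #s := by
    rw [← mul_sum, sum_add_distrib, sum_const, nsmul_eq_mul, mul_one]
    field_simp
  calc ∏ i ∈ s, (1 + a i) = (∏ i ∈ s, (1 + a i) ^ (#s : ℝ)⁻¹) ^ #s := by
        rw [← prod_pow]
        refine prod_congr rfl fun i hi => ?_
        rw [← Real.rpow_natCast, ← Real.rpow_mul (hz i hi), inv_mul_cancel₀ hcard.ne',
          Real.rpow_one]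
    _ ≤ (1 + (∑ i ∈ s, a i) / #s) ^ #s := by
        rw [← hmean]
        exact pow_le_pow_left₀ (prod_nonneg fun i hi => Real.rpow_nonneg (hz i hi) _) hamgm _

section dsep

variable {K : Type*} [NormedField K] {n : ℕ}

lemma dsep_le_norm_sub (ξ : Fin n → K) {i j : Fin n} (hji : j ≠ i) : dsep ξ i ≤ ‖ξ i - ξ j‖ :=
  csInf_le ⟨0, by rintro r ⟨k, -, rfl⟩; exact norm_nonneg _⟩ ⟨j, hji, rfl⟩

lemma dsep_nonneg (ξ : Fin n → K) (i : Fin n) : 0 ≤ dsep ξ i :=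
  Real.sInf_nonneg fun _ ⟨_, _, hr⟩ => hr ▸ norm_nonneg _

lemma dsep_pos {ξ : Fin n → K} (hξ : Injective ξ) {i j : Fin n} (hji : j ≠ i) :
    0 < dsep ξ i := by
  have hfin : {r : ℝ | ∃ j, j ≠ i ∧ r = ‖ξ i - ξ j‖}.Finite :=
    (Set.finite_range fun j => ‖ξ i - ξ j‖).subset fun r ⟨k, _, hr⟩ => ⟨k, hr.symm⟩
  have hne : {r : ℝ | ∃ j, j ≠ i ∧ r = ‖ξ i - ξ j‖}.Nonempty := ⟨_, j, hji, rfl⟩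
  obtain ⟨k, hki, hk⟩ := hne.csInf_mem hfin
  rw [dsep, hk, norm_pos_iff, sub_ne_zero]
  exact fun h => hki (hξ h).symm

end dsep

section Weierstrass

variable {K : Type*} [NormedField K] {n : ℕ} {ξ : Fin n → K}

noncomputable def relErr (ξ x : Fin n → K) (i : Fin n) : ℝ := ‖x i - ξ i‖ / dsep ξ i

lemma relErr_nonneg (ξ x : Fin n → K) (i : Fin n) : 0 ≤ relErr ξ x i :=
  div_nonneg (norm_nonneg _) (dsep_nonneg ξ i)

lemma relErr_le_mul_of_norm_sub_le {x y : Fin n → K} {i : Fin n} {c : ℝ}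
    (h : ‖y i - ξ i‖ ≤ c * ‖x i - ξ i‖) : relErr ξ y i ≤ c * relErr ξ x i := by
  rw [relErr, relErr, ← mul_div_assoc]
  exact div_le_div_of_nonneg_right h (dsep_nonneg ξ i)

lemma norm_sub_le_relErr_mul (hξ : Injective ξ) (x : Fin n → K) {i j : Fin n} (hij : i ≠ j) :
    ‖x j - ξ j‖ ≤ relErr ξ x j * ‖ξ i - ξ j‖ := by
  calc ‖x j - ξ j‖ = relErr ξ x j * dsep ξ j := (div_mul_cancel₀ _ (dsep_pos hξ hij).ne').symm
    _ ≤ relErr ξ x j * ‖ξ i - ξ j‖ := by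
        rw [norm_sub_rev]
        exact mul_le_mul_of_nonneg_left (dsep_le_norm_sub ξ hij) (relErr_nonneg ξ x j)

lemma one_sub_relErr_add_mul_le_norm_sub (hξ : Injective ξ) (x : Fin n → K) {i j : Fin n}
    (hij : i ≠ j) : (1 - (relErr ξ x i + relErr ξ x j)) * ‖ξ i - ξ j‖ ≤ ‖x i - x j‖ := by
  have hi := norm_sub_le_relErr_mul hξ x hij.symm
  have hj := norm_sub_le_relErr_mul hξ x hij
  rw [norm_sub_rev (ξ j)] at hi
  have htri : ‖ξ i - ξ j‖ ≤ ‖x i - x j‖ + ‖x i - ξ i‖ + ‖x j - ξ j‖ := by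
    calc ‖ξ i - ξ j‖ = ‖(x i - x j) - (x i - ξ i) + (x j - ξ j)‖ := by ring_nf
      _ ≤ ‖(x i - x j) - (x i - ξ i)‖ + ‖x j - ξ j‖ := norm_add_le _ _
      _ ≤ _ := by linarith [norm_sub_le (x i - x j) (x i - ξ i)]
  nlinarith

lemma Wcorr_eq_mul_prod {f : Polynomial K} (hroot : IsRootVector f ξ) (hf : f.leadingCoeff ≠ 0)
    {x : Fin n → K} (hx : Injective x) (i : Fin n) :
    Wcorr f x i = (x i - ξ i) * ∏ k ∈ univ.erase i, (1 + (x k - ξ k) / (x i - x k)) := by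
  rw [Wcorr, hroot, ← mul_prod_erase univ (fun k => x i - ξ k) (mem_univ i),
    mul_div_mul_left _ _ hf, mul_div_assoc, ← prod_div_distrib]
  congr 1
  refine prod_congr rfl fun k hk => ?_
  have hxik : x i - x k ≠ 0 := sub_ne_zero.2 (hx.ne (ne_of_mem_erase hk).symm)
  field_simp
  ring

noncomputable def contractionFactor (n : ℕ) (p q : ℝ≥0∞) (t : ℝ) : ℝ :=
  (1 + t / (epow ((n : ℝ) - 1) p * (1 - epow 2 q * t))) ^ (n - 1) - 1

lemma contractionFactor_nonneg (hn : 2 ≤ n) (p q : ℝ≥0∞) {t : ℝ} (ht : 0 ≤ t)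
    (h : epow 2 q * t < 1) : 0 ≤ contractionFactor n p q t := by
  have hn1 : (0 : ℝ) < n - 1 := by
    rw [sub_pos, Nat.one_lt_cast]
    omega
  have := epow_pos hn1 p
  have hbase : 1 ≤ 1 + t / (epow ((n : ℝ) - 1) p * (1 - epow 2 q * t)) :=
    le_add_of_nonneg_right (div_nonneg ht (mul_nonneg this.le (by linarith)))
  exact sub_nonneg.2 (one_le_pow₀ hbase)

variable {p q : ℝ≥0∞} [p.HolderConjugate q]

lemma one_sub_epow_mul_pnorm_mul_le_norm_sub (hξ : Injective ξ) (x : Fin n → K) {i j : Fin n}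
    (hij : i ≠ j) :
    (1 - epow 2 q * pnorm p (relErr ξ x)) * ‖ξ i - ξ j‖ ≤ ‖x i - x j‖ := by
  have hpair := abs_add_abs_le_epow_two_mul_pnorm p q (relErr ξ x) hij
  rw [abs_of_nonneg (relErr_nonneg ξ x i), abs_of_nonneg (relErr_nonneg ξ x j)] at hpair
  refine le_trans ?_ (one_sub_relErr_add_mul_le_norm_sub hξ x hij)
  exact mul_le_mul_of_nonneg_right (by linarith) (norm_nonneg _)

lemma injective_of_epow_mul_pnorm_relErr_lt_one (hξ : Injective ξ) {x : Fin n → K}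
    (h : epow 2 q * pnorm p (relErr ξ x) < 1) : Injective x := by
  intro i j hxij
  by_contra hij
  have hsep := one_sub_epow_mul_pnorm_mul_le_norm_sub (p := p) (q := q) hξ x hij
  rw [hxij, sub_self, norm_zero] at hsep
  have hξij : 0 < ‖ξ i - ξ j‖ := norm_pos_iff.2 (sub_ne_zero.2 (hξ.ne hij))
  exact hsep.not_gt (mul_pos (by linarith) hξij)

lemma norm_div_sub_le_relErr_div (hξ : Injective ξ) {x : Fin n → K}
    (h : epow 2 q * pnorm p (relErr ξ x) < 1) {i k : Fin n} (hki : k ≠ i) :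
    ‖(x k - ξ k) / (x i - x k)‖ ≤ relErr ξ x k / (1 - epow 2 q * pnorm p (relErr ξ x)) := by
  have hξik : 0 < ‖ξ i - ξ k‖ := norm_pos_iff.2 (sub_ne_zero.2 (hξ.ne hki.symm))
  rw [norm_div]
  calc ‖x k - ξ k‖ / ‖x i - x k‖
      ≤ relErr ξ x k * ‖ξ i - ξ k‖ / ((1 - epow 2 q * pnorm p (relErr ξ x)) * ‖ξ i - ξ k‖) :=
        div_le_div₀ (mul_nonneg (relErr_nonneg ξ x k) hξik.le)
          (norm_sub_le_relErr_mul hξ x hki.symm) (mul_pos (by linarith) hξik)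
          (one_sub_epow_mul_pnorm_mul_le_norm_sub hξ x hki.symm)
    _ = relErr ξ x k / (1 - epow 2 q * pnorm p (relErr ξ x)) := mul_div_mul_right _ _ hξik.ne'

lemma mean_norm_div_sub_le (hn : 2 ≤ n) (hξ : Injective ξ) {x : Fin n → K}
    (h : epow 2 q * pnorm p (relErr ξ x) < 1) (i : Fin n) :
    (∑ k ∈ univ.erase i, ‖(x k - ξ k) / (x i - x k)‖) / #(univ.erase i) ≤
      pnorm p (relErr ξ x) / (epow ((n : ℝ) - 1) p * (1 - epow 2 q * pnorm p (relErr ξ x))) := by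
  set E := pnorm p (relErr ξ x)
  have hn1 : (0 : ℝ) < n - 1 := by
    rw [sub_pos, Nat.one_lt_cast]
    omega
  have hcard : ((#(univ.erase i) : ℕ) : ℝ) = n - 1 := by
    simp [Nat.cast_sub (by omega : 1 ≤ n)]
  have hholder := sum_abs_le_epow_card_mul_pnorm p q (relErr ξ x) (univ.erase i)
  simp only [abs_of_nonneg (relErr_nonneg ξ x _), hcard] at hholder
  rw [hcard]
  calc (∑ k ∈ univ.erase i, ‖(x k - ξ k) / (x i - x k)‖) / (n - 1)
      ≤ (∑ k ∈ univ.erase i, relErr ξ x k / (1 - epow 2 q * E)) / (n - 1) := by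
        gcongr with k hk
        exact norm_div_sub_le_relErr_div hξ h (ne_of_mem_erase hk)
    _ ≤ epow ((n : ℝ) - 1) q * E / (1 - epow 2 q * E) / (n - 1) := by
        rw [← sum_div]
        gcongr
    _ = E / (epow ((n : ℝ) - 1) p * (1 - epow 2 q * E)) := by
        rw [div_right_comm, mul_div_right_comm, epow_div_self hn1 p q, inv_mul_eq_div, div_div]

lemma norm_prod_sub_one_le_contractionFactor (hn : 2 ≤ n) (hξ : Injective ξ) {x : Fin n → K}
    (h : epow 2 q * pnorm p (relErr ξ x) < 1) (i : Fin n) :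
    ‖∏ k ∈ univ.erase i, (1 + (x k - ξ k) / (x i - x k)) - 1‖ ≤
      contractionFactor n p q (pnorm p (relErr ξ x)) := by
  set E := pnorm p (relErr ξ x)
  have hmean := mean_norm_div_sub_le hn hξ h i
  calc ‖∏ k ∈ univ.erase i, (1 + (x k - ξ k) / (x i - x k)) - 1‖
      ≤ ∏ k ∈ univ.erase i, (1 + ‖(x k - ξ k) / (x i - x k)‖) - 1 :=
        norm_prod_one_add_sub_one_le_prod_sub_one _ _
    _ ≤ (1 + (∑ k ∈ univ.erase i, ‖(x k - ξ k) / (x i - x k)‖) / #(univ.erase i))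
          ^ #(univ.erase i) - 1 := by
        gcongr
        exact Real.prod_one_add_le_one_add_sum_div_card_pow _ fun _ _ => norm_nonneg _
    _ ≤ (1 + E / (epow ((n : ℝ) - 1) p * (1 - epow 2 q * E))) ^ #(univ.erase i) - 1 := by
        gcongr
    _ = contractionFactor n p q E := by simp [contractionFactor]

lemma norm_sub_Wcorr_sub_le (hn : 2 ≤ n) {f : Polynomial K} (hroot : IsRootVector f ξ)
    (hf : f.leadingCoeff ≠ 0) (hξ : Injective ξ) {x : Fin n → K}
    (h : epow 2 q * pnorm p (relErr ξ x) < 1) (i : Fin n) :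
    ‖x i - Wcorr f x i - ξ i‖ ≤ contractionFactor n p q (pnorm p (relErr ξ x)) * ‖x i - ξ i‖ := by
  rw [Wcorr_eq_mul_prod hroot hf (injective_of_epow_mul_pnorm_relErr_lt_one hξ h),
    show ∀ a b c : K, a - (a - b) * c - b = -((a - b) * (c - 1)) by intros; ring,
    norm_neg, norm_mul, mul_comm]
  exact mul_le_mul_of_nonneg_right (norm_prod_sub_one_le_contractionFactor hn hξ h i)
    (norm_nonneg _)

end Weierstrass

theorem weierstrass_first_kind_contraction_general {K : Type*} [NormedField K] {n : ℕ} (hn : 2 ≤ n)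
    (f : Polynomial K) (hdeg : f.natDegree = n)
    (ξ : Fin n → K) (hroot : IsRootVector f ξ) (hξ : Function.Injective ξ)
    (p q : ℝ≥0∞) (hpq : 1 / p + 1 / q = 1)
    (E : (Fin n → K) → ℝ)
    (hE : ∀ y : Fin n → K, E y = pnorm p (fun i => ‖y i - ξ i‖ / dsep ξ i))
    (φ : ℝ → ℝ)
    (hφ : ∀ t : ℝ, φ t = (1 + t / (epow ((n : ℝ) - 1) p * (1 - epow 2 q * t))) ^ (n - 1) - 1)
    (x : Fin n → K) (hx : E x < 1 / epow 2 q) :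
    Function.Injective x ∧
    E (fun i => x i - Wcorr f x i) ≤ E x * φ (E x) ∧
    ∀ i : Fin n, ‖(x i - Wcorr f x i) - ξ i‖ ≤ φ (E x) * ‖x i - ξ i‖ := by
  have : p.HolderConjugate q := ENNReal.holderConjugate_iff.2 (by simpa only [one_div] using hpq)
  obtain rfl : φ = contractionFactor n p q := funext hφ
  obtain rfl : E = fun y => pnorm p (relErr ξ y) := funext hE
  have hlt : epow 2 q * pnorm p (relErr ξ x) < 1 := by
    rwa [mul_comm, ← lt_div_iff₀ (epow_pos two_pos q)]
  have hf : f.leadingCoeff ≠ 0 :=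
    Polynomial.leadingCoeff_ne_zero.2 (by rintro rfl; simp at hdeg; omega)
  have hstep := norm_sub_Wcorr_sub_le hn hroot hf hξ hlt
  refine ⟨injective_of_epow_mul_pnorm_relErr_lt_one hξ hlt, ?_, hstep⟩
  rw [mul_comm]
  refine pnorm_le_mul_of_abs_le (ENNReal.HolderConjugate.ne_zero p q)
    (contractionFactor_nonneg hn p q (pnorm_nonneg p _) hlt) fun i => ?_
  simp only [abs_of_nonneg (relErr_nonneg ξ _ _)]
  exact relErr_le_mul_of_norm_sub_le (hstep i)

/-- If `f` has `n` simple zeros with root-vector `ξ` and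
`E(x) = ‖(x−ξ)/d(ξ)‖_p < 1/2^{1/q}`, then `x` has pairwise distinct components,
`E(Tx) ≤ E(x)·φ(E(x))` and `|T_i(x) − ξ_i| ≤ φ(E(x))·|x_i − ξ_i|`, where
`φ(t) = (1 + t/((n−1)^{1/p}(1 − 2^{1/q}t)))^{n−1} − 1`. -/
theorem weierstrass_first_kind_contraction {K : Type*} [NormedField K] {n : ℕ} (hn : 2 ≤ n)
    (f : Polynomial K) (hdeg : f.natDegree = n)
    (ξ : Fin n → K) (hroot : IsRootVector f ξ) (hξ : Function.Injective ξ)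
    (p q : ℝ≥0∞) (hp : 1 ≤ p) (hpq : 1 / p + 1 / q = 1)
    (E : (Fin n → K) → ℝ)
    (hE : ∀ y : Fin n → K, E y = pnorm p (fun i => ‖y i - ξ i‖ / dsep ξ i))
    (φ : ℝ → ℝ)
    (hφ : ∀ t : ℝ, φ t = (1 + t / (epow ((n : ℝ) - 1) p * (1 - epow 2 q * t))) ^ (n - 1) - 1)
    (x : Fin n → K) (hx : E x < 1 / epow 2 q) :
    Function.Injective x ∧
    E (fun i => x i - Wcorr f x i) ≤ E x * φ (E x) ∧
    ∀ i : Fin n, ‖(x i - Wcorr f x i) - ξ i‖ ≤ φ (E x) * ‖x i - ξ i‖ :=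
  weierstrass_first_kind_contraction_general hn f hdeg ξ hroot hξ p q hpq E hE φ hφ x hx
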